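/- For every integer k ≥ 3, the complement graph of the cycle graph C_{2k} on 2k vertices is weakly closed. -/
import Mathlib


/-- `G` is weakly closed: some labeling of the vertices by `1, …, n` is such that for
every edge `{i, j}` with `i < j` and every `i < k < j`, `{i,k} ∈ E(G)` or `{k,j} ∈ E(G)`. -/
def WeaklyClosed {V : Type*} [Fintype V] (G : SimpleGraph V) : Prop :=
  ∃ σ : V ≃ Fin (Fintype.card V), ∀ i j k : V,
    G.Adj i j → σ i < σ k → σ k < σ j → G.Adj i k ∨ G.Adj k j

private def fAux (k : ℕ) (v : Fin (2 * k)) : Fin (2 * k) :=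
  ⟨if v.val % 2 = 0 then v.val / 2 else k + v.val / 2, by
    have hv : v.val / 2 < k := by
      have := v.isLt
      omega
    split <;> omega⟩

private lemma fAux_lt {k : ℕ} {v : Fin (2 * k)} (h : v.val % 2 = 0) : (fAux k v).val < k := by
  have := v.isLt
  simp only [fAux, h, if_true]
  omega

private lemma fAux_ge {k : ℕ} {v : Fin (2 * k)} (h : v.val % 2 = 1) : k ≤ (fAux k v).val := by
  have hne : ¬ v.val % 2 = 0 := by omega
  simp only [fAux, hne, if_false]
  omega

private lemma fAux_inj (k : ℕ) : Function.Injective (fAux k) := by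
  intro v w h
  have h' : (fAux k v).val = (fAux k w).val := congrArg Fin.val h
  simp only [fAux] at h'
  have hv := v.isLt
  have hw := w.isLt
  have := Nat.mod_two_eq_zero_or_one v.val
  have := Nat.mod_two_eq_zero_or_one w.val
  apply Fin.ext
  rcases ‹v.val % 2 = 0 ∨ _› with hv2 | hv2 <;> rcases ‹w.val % 2 = 0 ∨ _› with hw2 | hw2 <;>
    simp [hv2, hw2] at h' <;> omega

private lemma sub_one_parity {k : ℕ} (hk : 3 ≤ k) {u v : Fin (2 * k)}
    (h : (u - v).val = 1) : u.val % 2 ≠ v.val % 2 := by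
  haveI : NeZero (2 * k) := ⟨by omega⟩
  have h2k : 1 < 2 * k := by omega
  have hone : (1 : Fin (2 * k)).val = 1 := by
    rw [Fin.val_one']
    exact Nat.mod_eq_of_lt h2k
  have h1 : u - v = 1 := Fin.ext (by rw [h, hone])
  have h2 : u = 1 + v := sub_eq_iff_eq_add.mp h1
  have h3 : u.val = (1 + v.val) % (2 * k) := by
    rw [h2, Fin.add_def, hone]
  have hv := v.isLt
  rcases Nat.lt_or_ge (1 + v.val) (2 * k) with hc | hc
  · rw [Nat.mod_eq_of_lt hc] at h3
    omega
  · have : 1 + v.val = 2 * k := by omega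
    rw [this, Nat.mod_self] at h3
    omega

/-- adjacency in the cycle graph on an even number of vertices changes parity -/
private lemma adj_parity {k : ℕ} (hk : 3 ≤ k) {u v : Fin (2 * k)}
    (h : (SimpleGraph.cycleGraph (2 * k)).Adj u v) : u.val % 2 ≠ v.val % 2 := by
  rw [SimpleGraph.cycleGraph_adj'] at h
  rcases h with h | h
  · exact sub_one_parity hk h
  · exact (sub_one_parity hk h).symm

/-- For `k ≥ 3`, the complement of the cycle of length `2k` is weakly closed. -/
theorem compl_cycleGraph_even_weaklyClosed (k : ℕ) (hk : 3 ≤ k) :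
    WeaklyClosed (SimpleGraph.cycleGraph (2 * k))ᶜ := by
  refine ⟨(Equiv.ofBijective (fAux k)
    ((Fintype.bijective_iff_injective_and_card _).mpr ⟨fAux_inj k, rfl⟩)).trans
    (finCongr (Fintype.card_fin (2 * k)).symm), ?_⟩
  intro i j m hadj h1 h2
  by_contra hcon
  push_neg at hcon
  obtain ⟨hc1, hc2⟩ := hcon
  have hval1 : (fAux k i).val < (fAux k m).val := h1
  have hval2 : (fAux k m).val < (fAux k j).val := h2
  have him : i ≠ m := fun h => by subst h; exact lt_irrefl _ hval1
  have hmj : m ≠ j := fun h => by subst h; exact lt_irrefl _ hval2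
  have ha1 : (SimpleGraph.cycleGraph (2 * k)).Adj i m := by
    by_contra h; exact hc1 ⟨him, h⟩
  have ha2 : (SimpleGraph.cycleGraph (2 * k)).Adj m j := by
    by_contra h; exact hc2 ⟨hmj, h⟩
  have p1 := adj_parity hk ha1
  have p2 := adj_parity hk ha2
  rcases Nat.mod_two_eq_zero_or_one m.val with hm | hm
  · have hi : i.val % 2 = 1 := by omega
    have := fAux_ge hi
    have := fAux_lt hm
    omega
  · have hj : j.val % 2 = 0 := by omega
    have := fAux_lt hj
    have := fAux_ge hm
    omega
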